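/- (Proposition 2.3(c)) Suppose J = ℕ, all T_j > 0, inf_{j∈ℕ} T_j > 1 and liminf_{j→∞} T_j < ∞. Then 𝔉_T^+ = ∅. -/

import Mathlib

open MeasureTheory Set Filter

/-- `μ ∈ 𝔉_T`: `μ` is a (distributional) fixed point of the min-type equation
`W =d inf_{j∈J} T_j W_j` for a family of positive weights `T`, expressed via the
survival function `F̄(t) = μ [t, ∞)`. -/
def MemFP {ι : Type*} [Countable ι] (T : ι → ℝ) (μ : Measure ℝ) : Prop :=
  IsProbabilityMeasure μ ∧
    ∀ t : ℝ, (μ (Ici t)).toReal = ∏' j, (μ (Ici (t / T j))).toReal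

/-- `μ ∈ 𝔉_T^+`: a fixed point concentrated on `(0, ∞)`. -/
def MemFPpos {ι : Type*} [Countable ι] (T : ι → ℝ) (μ : Measure ℝ) : Prop :=
  MemFP T μ ∧ μ (Ioi 0) = 1

/-!
Write `F t = μ [t, ∞)`, so that `F t = ∏ⱼ F (t / Tⱼ)`. Infinitely many `Tⱼ` lie below some `C`,
so the product at a point `t > 0` with `F t > 0` contains arbitrarily many factors bounded by
`F (t / C)`, which forces `F (t / C) = 1`. Once `F u = 1` with `u > 0`, every factor of the product
at `a u`, where `a = infⱼ Tⱼ > 1`, equals `1`, so `F (a u) = 1`; iterating gives `F (aⁿ u) = 1` for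
all `n`, hence `F ≡ 1`, which is impossible since `μ [t, ∞) → 0` as `t → ∞`.
-/

open Topology

lemma hasProd_iInf_of_nonneg_of_le_one {ι : Type*} {f : ι → ℝ} (h0 : ∀ i, 0 ≤ f i)
    (h1 : ∀ i, f i ≤ 1) : HasProd f (⨅ s : Finset ι, ∏ i ∈ s, f i) :=
  tendsto_atTop_ciInf (Finset.prod_anti_set_of_le_one h0 h1)
    ⟨0, forall_mem_range.2 fun _ => Finset.prod_nonneg fun i _ => h0 i⟩

lemma tprod_le_prod_of_nonneg_of_le_one {ι : Type*} {f : ι → ℝ} (h0 : ∀ i, 0 ≤ f i)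
    (h1 : ∀ i, f i ≤ 1) (s : Finset ι) : ∏' i, f i ≤ ∏ i ∈ s, f i := by
  rw [(hasProd_iInf_of_nonneg_of_le_one h0 h1).tprod_eq]
  exact ciInf_le ⟨0, forall_mem_range.2 fun _ => Finset.prod_nonneg fun i _ => h0 i⟩ s

lemma exists_infinite_setOf_le_of_liminf_lt_top {u : ℕ → ℝ}
    (h : liminf (fun j => (u j : EReal)) atTop < ⊤) : ∃ C : ℝ, {j | u j ≤ C}.Infinite := by
  obtain ⟨C, hlt, -⟩ := EReal.lt_iff_exists_real_btwn.1 h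
  refine ⟨C, Nat.frequently_atTop_iff_infinite.1 ?_⟩
  exact (frequently_lt_of_liminf_lt (by isBoundedDefault) hlt).mono fun j hj => by
    exact_mod_cast hj.le

lemma exists_lt_measure_Ici_ne_zero {μ : Measure ℝ} {a : ℝ} (h : μ (Ioi a) ≠ 0) :
    ∃ t, a < t ∧ μ (Ici t) ≠ 0 := by
  obtain ⟨x, -, hxa, hx⟩ := exists_seq_strictAnti_tendsto a
  by_contra! hzero
  rw [← iUnion_Ici_eq_Ioi_of_lt_of_tendsto hxa hx] at h
  exact h (measure_iUnion_null fun n => hzero _ (hxa n))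

lemma tendsto_measure_Ici_atTop_zero (μ : Measure ℝ) [IsFiniteMeasure μ] :
    Tendsto (fun t => μ (Ici t)) atTop (𝓝 0) := by
  have hempty : ⋂ t : ℝ, Ici t = ∅ :=
    eq_empty_of_forall_notMem fun x hx => (lt_add_one x).not_ge (mem_iInter.1 hx (x + 1))
  have := tendsto_measure_iInter_atTop (μ := μ)
    (fun _ => measurableSet_Ici.nullMeasurableSet) antitone_Ici ⟨0, measure_ne_top μ _⟩
  rwa [hempty, measure_empty] at this

section SurvivalFixedPoint

variable {ι : Type*} {T : ι → ℝ} {F : ℝ → ℝ}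

lemma eq_one_div_of_infinite_setOf_le (hF0 : ∀ t, 0 ≤ F t) (hF1 : ∀ t, F t ≤ 1)
    (hF : Antitone F) (hfix : ∀ t, F t = ∏' j, F (t / T j)) (hT : ∀ j, 0 < T j) {C : ℝ}
    (hC : {j | T j ≤ C}.Infinite) {t : ℝ} (ht : 0 ≤ t) (hFt : 0 < F t) : F (t / C) = 1 := by
  have hpow : ∀ n : ℕ, F t ≤ F (t / C) ^ n := by
    intro n
    obtain ⟨s, hsC, rfl⟩ := hC.exists_subset_card_eq n
    calc F t = ∏' j, F (t / T j) := hfix t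
      _ ≤ ∏ j ∈ s, F (t / T j) :=
        tprod_le_prod_of_nonneg_of_le_one (fun _ => hF0 _) (fun _ => hF1 _) s
      _ ≤ ∏ _j ∈ s, F (t / C) := Finset.prod_le_prod (fun _ _ => hF0 _) fun j hj =>
        hF (div_le_div_of_nonneg_left ht (hT j) (hsC hj))
      _ = F (t / C) ^ s.card := Finset.prod_const _
  by_contra hne
  have hlim := tendsto_pow_atTop_nhds_zero_of_lt_one (hF0 (t / C)) ((hF1 _).lt_of_ne hne)
  exact hFt.not_ge (ge_of_tendsto' hlim hpow)

lemma eq_one_mul_of_eq_one (hF1 : ∀ t, F t ≤ 1) (hF : Antitone F)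
    (hfix : ∀ t, F t = ∏' j, F (t / T j)) (hT : ∀ j, 0 < T j) {a : ℝ} (ha : ∀ j, a ≤ T j)
    {u : ℝ} (hu : 0 ≤ u) (hFu : F u = 1) : F (a * u) = 1 := by
  have hone : ∀ j, F (a * u / T j) = 1 := fun j => by
    refine le_antisymm (hF1 _) (hFu ▸ hF ((div_le_iff₀ (hT j)).2 ?_))
    nlinarith [ha j]
  rw [hfix, tprod_congr hone, tprod_one]

lemma eq_one_of_eq_one (hF1 : ∀ t, F t ≤ 1) (hF : Antitone F)
    (hfix : ∀ t, F t = ∏' j, F (t / T j)) (hT : ∀ j, 0 < T j) {a : ℝ} (ha1 : 1 < a)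
    (ha : ∀ j, a ≤ T j) {u : ℝ} (hu : 0 < u) (hFu : F u = 1) (s : ℝ) : F s = 1 := by
  have hpow : ∀ n : ℕ, F (a ^ n * u) = 1 := by
    intro n
    induction n with
    | zero => simpa using hFu
    | succ n ih =>
      rw [pow_succ', mul_assoc]
      exact eq_one_mul_of_eq_one hF1 hF hfix hT ha (by positivity) ih
  obtain ⟨n, hn⟩ := pow_unbounded_of_one_lt (s / u) ha1
  exact le_antisymm (hF1 s) (hpow n ▸ hF ((div_lt_iff₀ hu).1 hn).le)

theorem eq_one_of_infinite_setOf_le (hF0 : ∀ t, 0 ≤ F t) (hF1 : ∀ t, F t ≤ 1)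
    (hF : Antitone F) (hfix : ∀ t, F t = ∏' j, F (t / T j)) (hT : ∀ j, 0 < T j) {a C : ℝ}
    (ha1 : 1 < a) (ha : ∀ j, a ≤ T j) (hC : {j | T j ≤ C}.Infinite) {t : ℝ} (ht : 0 < t)
    (hFt : 0 < F t) (s : ℝ) : F s = 1 := by
  obtain ⟨j, hj⟩ := hC.nonempty
  have hCpos : 0 < C := (hT j).trans_le hj
  exact eq_one_of_eq_one hF1 hF hfix hT ha1 ha (div_pos ht hCpos)
    (eq_one_div_of_infinite_setOf_le hF0 hF1 hF hfix hT hC ht.le hFt) s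

end SurvivalFixedPoint

/-- (Proposition 2.3(c)) If `J = ℕ`, `inf_j T_j > 1` and `liminf_{j→∞} T_j < ∞`,
then `𝔉_T^+ = ∅`. -/
theorem stmt9 (T : ℕ → ℝ)
    (hT : ∀ j, 0 < T j) (hinf : 1 < ⨅ j, T j)
    (hliminf : Filter.liminf (fun j => (T j : EReal)) Filter.atTop < ⊤) :
    ∀ μ : Measure ℝ, ¬ MemFPpos T μ := by
  rintro μ ⟨⟨hμ, hfix⟩, hpos⟩
  obtain ⟨C, hC⟩ := exists_infinite_setOf_le_of_liminf_lt_top hliminf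
  obtain ⟨t, ht, hFt⟩ := exists_lt_measure_Ici_ne_zero (hpos ▸ one_ne_zero : μ (Ioi 0) ≠ 0)
  have hbdd : BddBelow (range T) := ⟨0, forall_mem_range.2 fun j => (hT j).le⟩
  have hone : ∀ s, (μ (Ici s)).toReal = 1 :=
    eq_one_of_infinite_setOf_le (fun _ => ENNReal.toReal_nonneg) (fun _ => measureReal_le_one)
      (fun _ _ hst => ENNReal.toReal_mono (measure_ne_top _ _) (measure_mono (Ici_subset_Ici.2 hst)))
      hfix hT hinf (ciInf_le hbdd) hC ht (ENNReal.toReal_pos hFt (measure_ne_top _ _))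
  obtain ⟨s, hs⟩ := ((tendsto_measure_Ici_atTop_zero μ).eventually (gt_mem_nhds zero_lt_one)).exists
  exact hs.ne ((ENNReal.toReal_eq_one_iff _).1 (hone s))
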